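/- Let G be a rooted graph (not a tree) and T a rooted tree that are cospectral with respect to the adjacency matrix, and such that G minus its root and T minus its root are also A-cospectral. Then for any rooted graph H, the coalescence of G with H (identifying the roots) is A-cospectral with the coalescence of T with H; in particular if H is a tree then the coalescence of T with H is a tree while the coalescence of G with H is not, giving a spectral faux tree. -/

import Mathlib

/-!
Write `φ` for the characteristic polynomial of the adjacency matrix `A`, and `H · G` for
`coalesce H u G v`. Over `β ⊕ {a // a ≠ v}` the matrix `A(H · G)` has diagonal blocks `A(H)` and
`A(G - v)` and off-diagonal blocks `e_u rᵀ`, `r e_uᵀ`, where `r` is the row of the root `v` in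
`A(G)`. Whenever `φ(G - v)(t) ≠ 0`, a Schur complement gives
`φ(H · G)(t) = φ(G - v)(t) · det (t - A(H) - s(t) e_u e_uᵀ)` with `s(t) = rᵀ (t - A(G - v))⁻¹ r`,
and taking for `H` a single vertex, `φ(G)(t) = φ(G - v)(t) (t - s(t))`. So `φ(G)` and `φ(G - v)`
determine `s`, hence the characteristic polynomial of every coalescence with `G`; two
polynomials agreeing off the finitely many roots of `φ(G - v)` are equal.

The coalescence of two trees is connected with `|E(H)| + |E(G)| = |V| - 1` edges. Conversely `G`
embeds into any coalescence with `G` and is a retract of it, so `G` is a tree when the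
coalescence is.
-/

open Matrix SimpleGraph Polynomial Classical

/-- The identified root is `Sum.inl u`; the other vertices of `G` are carried by `Sum.inr`. -/
def coalesce {β α : Type*} (H : SimpleGraph β) (u : β) (G : SimpleGraph α) (v : α) :
    SimpleGraph (β ⊕ {a : α // a ≠ v}) where
  Adj x y :=
    match x, y with
    | Sum.inl a, Sum.inl b => H.Adj a b
    | Sum.inl a, Sum.inr b => a = u ∧ G.Adj v b.1
    | Sum.inr a, Sum.inl b => b = u ∧ G.Adj v a.1
    | Sum.inr a, Sum.inr b => G.Adj a.1 b.1
  symm := by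
    constructor
    rintro (a | a) (b | b) h
    · exact h.symm
    · exact ⟨h.1, h.2⟩
    · exact ⟨h.1, h.2⟩
    · exact h.symm
  loopless := by
    constructor
    rintro (a | a) h
    · exact H.loopless.irrefl a h
    · exact G.loopless.irrefl a.1 h

def delVert {α : Type*} (G : SimpleGraph α) (v : α) : SimpleGraph {a : α // a ≠ v} :=
  G.induce {a : α | a ≠ v}

section Schur

variable {R n m : Type*} [CommRing R] [Fintype n] [Fintype m] [DecidableEq n] [DecidableEq m]

theorem Matrix.det_fromBlocks_vecMulVec (A : Matrix n n R) (a d : n → R) (b c : m → R)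
    (D : Matrix m m R) (hD : IsUnit D.det) :
    (fromBlocks A (vecMulVec a b) (vecMulVec c d) D).det =
      D.det * (A - (b ⬝ᵥ D⁻¹ *ᵥ c) • vecMulVec a d).det := by
  have := D.invertibleOfIsUnitDet hD
  rw [det_fromBlocks₂₂, invOf_eq_nonsing_inv, vecMulVec_mul, vecMulVec_mul_vecMulVec,
    vecMulVec_smul, ← dotProduct_mulVec]

theorem Matrix.scalar_sub_fromBlocks (t : R) (A : Matrix n n R) (B : Matrix n m R)
    (C : Matrix m n R) (D : Matrix m m R) :
    scalar (n ⊕ m) t - fromBlocks A B C D =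
      fromBlocks (scalar n t - A) (-B) (-C) (scalar m t - D) := by
  ext (i | i) (j | j) <;> simp [scalar_apply, diagonal_apply]

end Schur

section Coalescence

variable {α β : Type*} (H : SimpleGraph β) (u : β) (G : SimpleGraph α) (v : α)

@[simp] theorem coalesce_adj_inl_inl {a b : β} :
    (coalesce H u G v).Adj (.inl a) (.inl b) ↔ H.Adj a b := Iff.rfl

@[simp] theorem coalesce_adj_inl_inr {a : β} {b : {a : α // a ≠ v}} :
    (coalesce H u G v).Adj (.inl a) (.inr b) ↔ a = u ∧ G.Adj v b := Iff.rfl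

@[simp] theorem coalesce_adj_inr_inl {a : {a : α // a ≠ v}} {b : β} :
    (coalesce H u G v).Adj (.inr a) (.inl b) ↔ b = u ∧ G.Adj v a := Iff.rfl

@[simp] theorem coalesce_adj_inr_inr {a b : {a : α // a ≠ v}} :
    (coalesce H u G v).Adj (.inr a) (.inr b) ↔ G.Adj a b := Iff.rfl

@[simp] theorem delVert_adj {a b : {a : α // a ≠ v}} : (delVert G v).Adj a b ↔ G.Adj a b :=
  Iff.rfl

noncomputable def coalesceRight (u : β) (v : α) : α ↪ β ⊕ {a : α // a ≠ v} where
  toFun a := if h : a = v then .inl u else .inr ⟨a, h⟩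
  inj' a b hab := by
    by_cases ha : a = v <;> by_cases hb : b = v <;> simp_all

def coalesceRetract (v : α) : β ⊕ {a : α // a ≠ v} → α :=
  Sum.elim (fun _ => v) Subtype.val

variable {u v}

@[simp] theorem coalesceRight_root : coalesceRight u v v = .inl u := dif_pos rfl

@[simp] theorem coalesceRight_val (a : {a : α // a ≠ v}) : coalesceRight u v a.1 = .inr a :=
  dif_neg a.2

@[simp] theorem coalesceRetract_coalesceRight (a : α) :
    coalesceRetract (β := β) v (coalesceRight u v a) = a := by
  by_cases ha : a = v <;> simp [coalesceRetract, coalesceRight, ha]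

theorem coalesceRight_eq_inl {a : α} {b : β} :
    coalesceRight u v a = .inl b ↔ a = v ∧ b = u := by
  by_cases ha : a = v
  · simp [ha, eq_comm]
  · simp [coalesceRight, ha]

theorem coalesceRight_eq_inr {a : α} {b : {a : α // a ≠ v}} :
    coalesceRight u v a = .inr b ↔ a = b.1 :=
  ⟨fun h => (coalesceRetract_coalesceRight a).symm.trans (congrArg (coalesceRetract v) h),
    fun h => h ▸ coalesceRight_val b⟩

variable (u v)

theorem coalesce_eq_sup :
    coalesce H u G v = H.map Function.Embedding.inl ⊔ G.map (coalesceRight u v) := by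
  ext (a | a) (b | b) <;>
    simp [map_adj, coalesceRight_eq_inl, coalesceRight_eq_inr, adj_comm, and_comm]

theorem coalesce_adj_coalesceRight {a b : α} :
    (coalesce H u G v).Adj (coalesceRight u v a) (coalesceRight u v b) ↔ G.Adj a b := by
  rw [coalesce_eq_sup, sup_adj, map_adj_apply, or_iff_right_iff_imp]
  rintro ⟨-, a', b', hab', ha', hb'⟩
  rw [Function.Embedding.inl_apply, eq_comm, coalesceRight_eq_inl] at ha' hb'
  exact absurd (ha'.2.trans hb'.2.symm) hab'.ne

def coalesceLeftEmbedding : H ↪g coalesce H u G v := ⟨Function.Embedding.inl, Iff.rfl⟩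

noncomputable def coalesceRightEmbedding : G ↪g coalesce H u G v :=
  ⟨coalesceRight u v, coalesce_adj_coalesceRight H u G v⟩

@[simp] theorem coalesceRightEmbedding_apply (a : α) :
    coalesceRightEmbedding H u G v a = coalesceRight u v a := rfl

theorem coalesceRetract_eq_or_adj ⦃x y : β ⊕ {a : α // a ≠ v}⦄
    (h : (coalesce H u G v).Adj x y) :
    coalesceRetract v x = coalesceRetract v y ∨
      G.Adj (coalesceRetract v x) (coalesceRetract v y) := by
  rcases x with a | a <;> rcases y with b | b
  · exact .inl rfl
  · exact .inr h.2
  · exact .inr h.2.symm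
  · exact .inr h

theorem card_edgeSet_coalesce [Finite α] [Finite β] :
    Nat.card (coalesce H u G v).edgeSet = Nat.card H.edgeSet + Nat.card G.edgeSet := by
  have hdisj : Disjoint (H.map Function.Embedding.inl).edgeSet
      (G.map (coalesceRight u v)).edgeSet := by
    refine Set.disjoint_left.2 (Sym2.ind fun x y hH hG => ?_)
    rw [mem_edgeSet, map_adj] at hH hG
    obtain ⟨a, b, -, rfl, rfl⟩ := hH
    obtain ⟨a', b', hab', ha', hb'⟩ := hG
    rw [Function.Embedding.inl_apply, coalesceRight_eq_inl] at ha' hb'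
    exact hab'.ne (ha'.1.trans hb'.1.symm)
  rw [coalesce_eq_sup, edgeSet_sup, Nat.card_coe_set_eq, Set.ncard_union_eq hdisj, edgeSet_map,
    edgeSet_map, Set.ncard_image_of_injective _ Function.Embedding.inl.sym2Map.injective,
    Set.ncard_image_of_injective _ (coalesceRight u v).sym2Map.injective,
    Nat.card_coe_set_eq, Nat.card_coe_set_eq]

end Coalescence

theorem SimpleGraph.Reachable.map_of_eq_or_adj {V V' : Type*} {G : SimpleGraph V}
    {G' : SimpleGraph V'} {f : V → V'}
    (hf : ∀ ⦃a b⦄, G.Adj a b → f a = f b ∨ G'.Adj (f a) (f b)) {x y : V}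
    (h : G.Reachable x y) : G'.Reachable (f x) (f y) := by
  rw [reachable_iff_reflTransGen] at h ⊢
  refine Relation.ReflTransGen.lift' f (fun a b hab => ?_) _ _ h
  rcases hf hab with heq | hadj
  · rw [Function.onFun, heq]
  · exact .single hadj

section Trees

variable {α β : Type*} {H : SimpleGraph β} {G : SimpleGraph α}

theorem connected_coalesce (hH : H.Connected) (hG : G.Connected) (u : β) (v : α) :
    (coalesce H u G v).Connected := by
  have toRoot : ∀ x, (coalesce H u G v).Reachable x (.inl u) := by
    rintro (b | a)
    · exact (hH.preconnected b u).map (coalesceLeftEmbedding H u G v).toHom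
    · simpa using (hG.preconnected a v).map (coalesceRightEmbedding H u G v).toHom
  exact (connected_iff_exists_forall_reachable _).2 ⟨.inl u, fun x => (toRoot x).symm⟩

theorem isTree_coalesce [Finite α] [Finite β] (hH : H.IsTree) (hG : G.IsTree)
    (u : β) (v : α) : (coalesce H u G v).IsTree := by
  rw [isTree_iff_connected_and_card] at hH hG ⊢
  refine ⟨connected_coalesce hH.1 hG.1 u v, ?_⟩
  have hV : Nat.card {a : α // a ≠ v} + 1 = Nat.card α := by
    rw [← Finite.card_option, Nat.card_congr (Equiv.optionSubtypeNe v)]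
  rw [card_edgeSet_coalesce, Nat.card_sum]
  omega

theorem isTree_of_isTree_coalesce {u : β} {v : α} (h : (coalesce H u G v).IsTree) :
    G.IsTree where
  connected := by
    have : Nonempty α := ⟨v⟩
    refine ⟨fun a b => ?_⟩
    have := h.connected.preconnected (coalesceRight u v a) (coalesceRight u v b)
    simpa using this.map_of_eq_or_adj (coalesceRetract_eq_or_adj H u G v)
  isAcyclic := h.isAcyclic.embedding (coalesceRightEmbedding H u G v)

end Trees

section Spectrum

variable {α β : Type*} (H : SimpleGraph β) (u : β) (G : SimpleGraph α) (v : α)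

theorem adjMatrix_coalesce [DecidableEq β] (R : Type*) [NonAssocSemiring R] :
    (coalesce H u G v).adjMatrix R =
      fromBlocks (H.adjMatrix R) (vecMulVec (Pi.single u 1) (G.adjMatrix R v ∘ Subtype.val))
        (vecMulVec (G.adjMatrix R v ∘ Subtype.val) (Pi.single u 1))
        ((delVert G v).adjMatrix R) := by
  ext (i | i) (j | j) <;>
    simp [adjMatrix_apply, vecMulVec_apply, Pi.single_apply, adj_comm, ← ite_and, and_comm]

noncomputable def coalesceBotIso : coalesce (⊥ : SimpleGraph Unit) () G v ≃g G where
  toFun := coalesceRetract v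
  invFun := coalesceRight () v
  left_inv := by rintro (⟨⟩ | a) <;> simp [coalesceRetract]
  right_inv := coalesceRetract_coalesceRight
  map_rel_iff' := by
    rintro (⟨⟩ | a) (⟨⟩ | b) <;> simp [coalesceRetract, adj_comm]

variable {K : Type*} [Field K] [Fintype α] [Fintype β]

noncomputable def rootResolvent (t : K) : K :=
  (G.adjMatrix K v ∘ Subtype.val) ⬝ᵥ
    (scalar _ t - (delVert G v).adjMatrix K)⁻¹ *ᵥ (G.adjMatrix K v ∘ Subtype.val)

variable {G v}

theorem eval_charpoly_adjMatrix_coalesce [DecidableEq β] {t : K}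
    (ht : ((delVert G v).adjMatrix K).charpoly.eval t ≠ 0) :
    ((coalesce H u G v).adjMatrix K).charpoly.eval t =
      ((delVert G v).adjMatrix K).charpoly.eval t *
        (scalar β t - H.adjMatrix K -
          rootResolvent G v t • vecMulVec (Pi.single u 1) (Pi.single u 1)).det := by
  rw [eval_charpoly] at ht
  rw [eval_charpoly, eval_charpoly, adjMatrix_coalesce, scalar_sub_fromBlocks, ← neg_vecMulVec,
    ← vecMulVec_neg, det_fromBlocks_vecMulVec _ _ _ _ _ _ ht.isUnit, neg_vecMulVec,
    ← vecMulVec_neg, neg_neg]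
  rfl

theorem eval_charpoly_adjMatrix {t : K}
    (ht : ((delVert G v).adjMatrix K).charpoly.eval t ≠ 0) :
    (G.adjMatrix K).charpoly.eval t =
      ((delVert G v).adjMatrix K).charpoly.eval t * (t - rootResolvent G v t) := by
  rw [← Iso.reindex_adjMatrix K (coalesceBotIso G v), charpoly_reindex,
    eval_charpoly_adjMatrix_coalesce ⊥ () ht, det_unique]
  simp [vecMulVec_apply]

theorem charpoly_adjMatrix_coalesce_eq_of_cospectral [Infinite K] {γ : Type*} [Fintype γ]
    {T : SimpleGraph γ} {w : γ} (hco : (G.adjMatrix K).charpoly = (T.adjMatrix K).charpoly)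
    (hco' : ((delVert G v).adjMatrix K).charpoly = ((delVert T w).adjMatrix K).charpoly) :
    ((coalesce H u G v).adjMatrix K).charpoly = ((coalesce H u T w).adjMatrix K).charpoly := by
  have hfin := finite_setOfPred_isRoot ((delVert G v).adjMatrix K).charpoly_monic.ne_zero
  refine eq_of_infinite_eval_eq _ _ <| hfin.infinite_compl.mono fun t (hG : eval t _ ≠ 0) => ?_
  have hT : ((delVert T w).adjMatrix K).charpoly.eval t ≠ 0 := hco' ▸ hG
  have hres : rootResolvent G v t = rootResolvent T w t := by
    have h := eval_charpoly_adjMatrix hG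
    rw [hco, eval_charpoly_adjMatrix hT, hco'] at h
    exact (sub_right_inj.1 (mul_left_cancel₀ hT h)).symm
  show eval t _ = eval t _
  rw [eval_charpoly_adjMatrix_coalesce H u hG, eval_charpoly_adjMatrix_coalesce H u hT, hco',
    hres]

end Spectrum

/-- If a rooted non-tree `G` and a rooted tree `T` are `A`-cospectral and remain
`A`-cospectral after deleting the roots, then for any rooted graph `H` the coalescences of
`H` with `G` and with `T` are `A`-cospectral; moreover, if `H` is a tree, then the
coalescence with `T` is a tree while the coalescence with `G` is not — a spectral faux
tree for the adjacency matrix. -/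
theorem schwenk_faux_tree
    {α₁ α₂ β : Type*} [Fintype α₁] [Fintype α₂] [Fintype β]
    (G : SimpleGraph α₁) (v : α₁) (T : SimpleGraph α₂) (w : α₂)
    (hGnt : ¬ G.IsTree) (hTt : T.IsTree)
    (hco : (G.adjMatrix ℝ).charpoly = (T.adjMatrix ℝ).charpoly)
    (hco' : ((delVert G v).adjMatrix ℝ).charpoly = ((delVert T w).adjMatrix ℝ).charpoly)
    (H : SimpleGraph β) (u : β) :
    ((coalesce H u G v).adjMatrix ℝ).charpoly =
        ((coalesce H u T w).adjMatrix ℝ).charpoly ∧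
      (H.IsTree → (coalesce H u T w).IsTree ∧ ¬ (coalesce H u G v).IsTree) :=
  ⟨charpoly_adjMatrix_coalesce_eq_of_cospectral H u hco hco', fun hH =>
    ⟨isTree_coalesce hH hTt u w, fun hG => hGnt (isTree_of_isTree_coalesce hG)⟩⟩
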